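/- Let F̄ = 1 - F be regularly varying at infinity with index -1/γ₁, γ₁ > 0, where F is a continuous distribution function on (0,∞). Then for each natural number k, ∫_t^∞ (log(x/t))^k dF(x) ∼ γ₁^k · k! · F̄(t) as t → ∞. In particular, for k = 1, the conditional mean E[log(X/t) | X > t] converges to γ₁. -/

import Mathlib

/-!
Write `G t = μ (t, ∞) = 1 - F t`. By the layer-cake formula,
`∫_{(t,∞)} log (x/t) ^ (m+1) dμ = ∫_0^∞ (m+1) u^m G (t eᵘ) du`.
Regular variation gives `G (t eᵘ) / G t → e^{-u/γ₁}` for each `u`, and iterating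
`G (t e) ≤ c G t` (some `c < 1`, all large `t`) bounds this ratio by `C e^{-b u}` uniformly in
large `t`. Dominated convergence then yields the limit
`∫_0^∞ (m+1) u^m e^{-u/γ₁} du = γ₁^(m+1) (m+1)!`.
-/

open MeasureTheory Filter Set Real

theorem integral_pow_mul_exp_neg_mul_Ioi (m : ℕ) {b : ℝ} (hb : 0 < b) :
    ∫ u in Ioi (0 : ℝ), u ^ m * exp (-(b * u)) = m.factorial / b ^ (m + 1) := by
  have h := integral_rpow_mul_exp_neg_mul_Ioi (a := m + 1) (by positivity) hb
  simp only [add_sub_cancel_right, rpow_natCast, Gamma_nat_eq_factorial] at h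
  rw [h, ← Nat.cast_succ, rpow_natCast, one_div, inv_pow, div_eq_mul_inv, mul_comm]

theorem integrableOn_pow_mul_exp_neg_mul_Ioi (m : ℕ) {b : ℝ} (hb : 0 < b) :
    IntegrableOn (fun u => u ^ m * exp (-(b * u))) (Ioi 0) :=
  .of_integral_ne_zero (by rw [integral_pow_mul_exp_neg_mul_Ioi m hb]; positivity)

theorem setOf_lt_log_div_inter_Ioi {t u : ℝ} (ht : 0 < t) (hu : 0 ≤ u) :
    {x | u < log (x / t)} ∩ Ioi t = Ioi (t * exp u) := by
  ext x
  have hlt_iff : t < x → (u < log (x / t) ↔ t * exp u < x) := fun htx => by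
    rw [lt_log_iff_exp_lt (div_pos (ht.trans htx) ht), lt_div_iff₀ ht, mul_comm]
  simp only [mem_inter_iff, mem_ofPred_eq, mem_Ioi]
  constructor
  · rintro ⟨hux, htx⟩
    exact (hlt_iff htx).1 hux
  · intro hx
    have htx : t < x := (le_mul_of_one_le_right ht.le (one_le_exp hu)).trans_lt hx
    exact ⟨(hlt_iff htx).2 hx, htx⟩

theorem setIntegral_Ioi_log_div_pow_succ (μ : Measure ℝ) [IsFiniteMeasure μ] {t : ℝ}
    (ht : 0 < t) (m : ℕ) :
    ∫ x in Ioi t, log (x / t) ^ (m + 1) ∂μ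
      = ∫ u in Ioi 0, (m + 1) * u ^ m * μ.real (Ioi (t * exp u)) := by
  have hlog_nn : 0 ≤ᵐ[μ.restrict (Ioi t)] fun x => log (x / t) :=
    ae_restrict_of_forall_mem measurableSet_Ioi fun x hx =>
      log_nonneg ((one_le_div ht).2 (le_of_lt hx))
  have hlog_meas : Measurable fun x => log (x / t) := by fun_prop
  have hweight_nn : ∀ᵐ u ∂volume.restrict (Ioi 0), 0 ≤ (m + 1 : ℝ) * u ^ m :=
    ae_restrict_of_forall_mem measurableSet_Ioi fun u (hu : 0 < u) => by positivity
  have hprimitive : ∀ s : ℝ, ∫ u in (0 : ℝ)..s, (m + 1) * u ^ m = s ^ (m + 1) := fun s => by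
    rw [intervalIntegral.integral_const_mul, integral_pow]
    field_simp
    ring
  have hlayer := lintegral_comp_eq_lintegral_meas_lt_mul (μ.restrict (Ioi t)) hlog_nn
    hlog_meas.aemeasurable (g := fun u => (m + 1) * u ^ m)
    (fun s _ => (by fun_prop : Continuous fun u : ℝ => (m + 1) * u ^ m).intervalIntegrable 0 s)
    hweight_nn
  simp only [hprimitive] at hlayer
  have htail_anti : Antitone fun u => μ.real (Ioi (t * exp u)) := fun u v huv =>
    measureReal_mono (Ioi_subset_Ioi (by gcongr))
  rw [integral_eq_lintegral_of_nonneg_ae (hlog_nn.mono fun x hx => pow_nonneg hx _)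
      (hlog_meas.pow_const _).aestronglyMeasurable, hlayer,
    integral_eq_lintegral_of_nonneg_ae (f := fun u => (m + 1) * u ^ m * μ.real (Ioi (t * exp u)))
      (hweight_nn.mono fun u hu => by positivity)
      (((by fun_prop : Measurable fun u : ℝ => (m + 1) * u ^ m).mul
        htail_anti.measurable).aestronglyMeasurable)]
  congr 1
  refine setLIntegral_congr_fun measurableSet_Ioi fun u (hu : 0 < u) => ?_
  rw [Measure.restrict_apply (measurableSet_lt measurable_const hlog_meas),
    setOf_lt_log_div_inter_Ioi ht hu.le, ← ofReal_measureReal,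
    ← ENNReal.ofReal_mul measureReal_nonneg, mul_comm]

/-- Since `x / 0 = 0`, the condition at `x = 1` forces `G` to be eventually nonzero. -/
def IsRegularlyVarying (G : ℝ → ℝ) (ρ : ℝ) : Prop :=
  ∀ x > 0, Tendsto (fun t => G (t * x) / G t) atTop (nhds (x ^ ρ))

namespace IsRegularlyVarying

variable {G : ℝ → ℝ} {ρ α : ℝ}

theorem eventually_ne_zero (hG : IsRegularlyVarying G ρ) : ∀ᶠ t in atTop, G t ≠ 0 := by
  have h := hG 1 one_pos
  simp only [mul_one, one_rpow] at h
  filter_upwards [h.eventually_ne one_ne_zero] with t ht h0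
  simp [h0] at ht

theorem exists_eventually_le_mul (hG : IsRegularlyVarying G (-α)) (hα : 0 < α)
    (hnn : 0 ≤ G) : ∃ c, 0 < c ∧ c < 1 ∧ ∀ᶠ t in atTop, G (t * exp 1) ≤ c * G t := by
  have hlim_lt : exp 1 ^ (-α) < 1 :=
    rpow_lt_one_of_one_lt_of_neg (one_lt_exp_iff.2 one_pos) (neg_neg_of_pos hα)
  obtain ⟨c, hlim_c, hc1⟩ := exists_between hlim_lt
  refine ⟨c, (rpow_pos_of_pos (exp_pos 1) _).trans hlim_c, hc1, ?_⟩
  filter_upwards [(hG (exp 1) (exp_pos 1)).eventually_lt_const hlim_c, hG.eventually_ne_zero]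
    with t ht hne
  exact ((div_lt_iff₀ ((hnn t).lt_of_ne' hne)).1 ht).le

theorem exists_le_mul_exp_neg (hG : IsRegularlyVarying G (-α)) (hα : 0 < α)
    (hanti : Antitone G) (hnn : 0 ≤ G) :
    ∃ C b T, 0 < b ∧ ∀ t ≥ T, ∀ u ≥ 0, G (t * exp u) ≤ C * exp (-(b * u)) * G t := by
  obtain ⟨c, hc0, hc1, hstep⟩ := hG.exists_eventually_le_mul hα hnn
  obtain ⟨T, hT⟩ := eventually_atTop.1 (hstep.and (eventually_ge_atTop 0))
  have hgeom : ∀ t ≥ T, ∀ n : ℕ, G (t * exp n) ≤ c ^ n * G t := by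
    intro t ht n
    induction n with
    | zero => simp
    | succ n ih =>
      have htn : T ≤ t * exp n :=
        ht.trans (le_mul_of_one_le_right (hT t ht).2 (one_le_exp n.cast_nonneg))
      calc G (t * exp ↑(n + 1)) = G (t * exp n * exp 1) := by
            rw [Nat.cast_succ, exp_add, mul_assoc]
        _ ≤ c * G (t * exp n) := (hT _ htn).1
        _ ≤ c * (c ^ n * G t) := by gcongr
        _ = c ^ (n + 1) * G t := by ring
  have hlogc : log c < 0 := log_neg hc0 hc1
  refine ⟨c⁻¹, -log c, T, neg_pos.2 hlogc, fun t ht u hu => ?_⟩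
  -- `c ^ ⌊u⌋₊ ≤ c ^ (u - 1)` as `u - 1 < ⌊u⌋₊` and `c < 1`
  have hfloor : c ^ ⌊u⌋₊ ≤ c⁻¹ * exp (-(-log c * u)) := by
    rw [← exp_log hc0, ← exp_nat_mul, ← exp_neg, log_exp, ← exp_add]
    gcongr
    nlinarith [Nat.lt_floor_add_one u]
  calc G (t * exp u) ≤ G (t * exp ⌊u⌋₊) :=
        hanti (mul_le_mul_of_nonneg_left (exp_le_exp.2 (Nat.floor_le hu)) (hT t ht).2)
    _ ≤ c ^ ⌊u⌋₊ * G t := hgeom t ht _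
    _ ≤ c⁻¹ * exp (-(-log c * u)) * G t := by gcongr; exact hnn t

theorem tendsto_integral_pow_mul_div (hG : IsRegularlyVarying G (-α)) (hα : 0 < α)
    (hanti : Antitone G) (hnn : 0 ≤ G) (m : ℕ) :
    Tendsto (fun t => ∫ u in Ioi 0, (m + 1) * u ^ m * (G (t * exp u) / G t)) atTop
      (nhds ((m + 1).factorial / α ^ (m + 1))) := by
  obtain ⟨C, b, T, hb, hbound⟩ := hG.exists_le_mul_exp_neg hα hanti hnn
  have hlimit : ∫ u in Ioi 0, (m + 1) * u ^ m * exp (-(α * u))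
      = (m + 1).factorial / α ^ (m + 1) := by
    simp_rw [mul_assoc, integral_const_mul, integral_pow_mul_exp_neg_mul_Ioi m hα,
      Nat.factorial_succ]
    push_cast
    ring
  rw [← hlimit]
  refine tendsto_integral_filter_of_dominated_convergence
    (fun u => (m + 1) * C * (u ^ m * exp (-(b * u)))) ?_ ?_
    ((integrableOn_pow_mul_exp_neg_mul_Ioi m hb).const_mul _) ?_
  · filter_upwards [eventually_ge_atTop 0] with t ht
    have : Antitone fun u => G (t * exp u) := hanti.comp_monotone fun u v huv => by gcongr
    exact ((by fun_prop : Measurable fun u : ℝ => (m + 1) * u ^ m).mul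
      (this.measurable.div_const _)).aestronglyMeasurable
  · filter_upwards [eventually_ge_atTop T, hG.eventually_ne_zero] with t ht hne
    refine ae_restrict_of_forall_mem measurableSet_Ioi fun u (hu : 0 < u) => ?_
    have hGt : 0 < G t := (hnn t).lt_of_ne' hne
    have hGtu : 0 ≤ G (t * exp u) := hnn _
    rw [Real.norm_of_nonneg (by positivity)]
    calc (m + 1) * u ^ m * (G (t * exp u) / G t)
          ≤ (m + 1) * u ^ m * (C * exp (-(b * u))) := by
          gcongr
          exact (div_le_iff₀ hGt).2 (hbound t ht u hu.le)
      _ = (m + 1) * C * (u ^ m * exp (-(b * u))) := by ring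
  · refine ae_restrict_of_forall_mem measurableSet_Ioi fun u _ => ?_
    have h := (hG (exp u) (exp_pos u)).const_mul ((m + 1) * u ^ m)
    rwa [← exp_mul, mul_neg, mul_comm u α] at h

end IsRegularlyVarying

theorem tendsto_setIntegral_log_div_pow_div_measureReal_Ioi (μ : Measure ℝ)
    [IsFiniteMeasure μ] {α : ℝ} (hμ : IsRegularlyVarying (fun t => μ.real (Ioi t)) (-α))
    (hα : 0 < α) (k : ℕ) :
    Tendsto (fun t => (∫ x in Ioi t, log (x / t) ^ k ∂μ) / μ.real (Ioi t)) atTop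
      (nhds (k.factorial / α ^ k)) := by
  cases k with
  | zero =>
    refine tendsto_const_nhds.congr' ?_
    filter_upwards [hμ.eventually_ne_zero] with t ht
    simp [div_self ht]
  | succ m =>
    have htail_anti : Antitone fun t => μ.real (Ioi t) := fun s t hst =>
      measureReal_mono (Ioi_subset_Ioi hst)
    refine (hμ.tendsto_integral_pow_mul_div hα htail_anti (fun _ => measureReal_nonneg) m).congr'
      ?_
    filter_upwards [eventually_gt_atTop 0] with t ht
    rw [setIntegral_Ioi_log_div_pow_succ μ ht, ← integral_div]
    simp_rw [mul_div_assoc]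

theorem tail_integral_log_pow_general
    (μ : Measure ℝ) [IsProbabilityMeasure μ]
    (F : ℝ → ℝ) (hF : F = fun t => (μ (Iic t)).toReal)
    (γ₁ : ℝ) (hγ₁ : 0 < γ₁)
    (hFrv : ∀ x > (0 : ℝ), Tendsto (fun t => (1 - F (t * x)) / (1 - F t))
      atTop (nhds (x ^ (-1 / γ₁)))) :
    (∀ k : ℕ, Tendsto (fun t =>
        (∫ x in Ioi t, (Real.log (x / t)) ^ k ∂μ) /
          (γ₁ ^ k * (Nat.factorial k : ℝ) * (1 - F t)))
      atTop (nhds 1)) ∧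
    Tendsto (fun t => (∫ x in Ioi t, Real.log (x / t) ∂μ) / (1 - F t))
      atTop (nhds γ₁) := by
  have htail : ∀ t, 1 - F t = μ.real (Ioi t) := fun t => by
    rw [hF, ← compl_Iic, probReal_compl_eq_one_sub measurableSet_Iic, measureReal_def]
  simp_rw [htail] at hFrv ⊢
  rw [neg_div, one_div] at hFrv
  have hmoment := tendsto_setIntegral_log_div_pow_div_measureReal_Ioi μ hFrv (inv_pos.2 hγ₁)
  simp_rw [inv_pow, div_inv_eq_mul] at hmoment
  refine ⟨fun k => ?_, by simpa using hmoment 1⟩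
  have hconst : γ₁ ^ k * (k.factorial : ℝ) ≠ 0 := by positivity
  simpa [div_self hconst, div_div, mul_comm] using (hmoment k).div_const (γ₁ ^ k * k.factorial)

theorem tail_integral_log_pow
    (μ : Measure ℝ) [IsProbabilityMeasure μ]
    (F : ℝ → ℝ) (hF : F = fun t => (μ (Iic t)).toReal)
    (hFcont : Continuous F) (hμpos : μ (Iic 0) = 0)
    (hFbar_pos : ∀ x, F x < 1)
    (γ₁ : ℝ) (hγ₁ : 0 < γ₁)
    (hFrv : ∀ x > (0 : ℝ), Tendsto (fun t => (1 - F (t * x)) / (1 - F t))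
      atTop (nhds (x ^ (-1 / γ₁)))) :
    (∀ k : ℕ, Tendsto (fun t =>
        (∫ x in Ioi t, (Real.log (x / t)) ^ k ∂μ) /
          (γ₁ ^ k * (Nat.factorial k : ℝ) * (1 - F t)))
      atTop (nhds 1)) ∧
    Tendsto (fun t => (∫ x in Ioi t, Real.log (x / t) ∂μ) / (1 - F t))
      atTop (nhds γ₁) :=
  tail_integral_log_pow_general μ F hF γ₁ hγ₁ hFrv
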